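/- Assume conditions (P) and (S), and define τ = (τ₁, τ₂) by τ_i = sup{θ_i : θ ∈ 𝒟^(1) ∩ 𝒟^(2)} for i = 1, 2. Then: in Category I, τ = (θ^(1,Γ)₁, θ^(2,Γ)₂); in Category II, τ = θ̃^(2,r); in Category III, τ = θ̃^(1,r). -/

import Mathlib

open Matrix Set

noncomputable section

abbrev V : Type := Fin 2 → ℝ

def gam (S : Matrix (Fin 2) (Fin 2) ℝ) (μ : V) (θ : V) : ℝ :=
  -(1/2) * (θ ⬝ᵥ S.mulVec θ) - μ ⬝ᵥ θ

def gam1 (R : Matrix (Fin 2) (Fin 2) ℝ) (θ : V) : ℝ := R 0 0 * θ 0 + R 1 0 * θ 1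
def gam2 (R : Matrix (Fin 2) (Fin 2) ℝ) (θ : V) : ℝ := R 0 1 * θ 0 + R 1 1 * θ 1

def condP (R : Matrix (Fin 2) (Fin 2) ℝ) : Prop :=
  0 < R 0 0 ∧ 0 < R 1 1 ∧ 0 < R 0 0 * R 1 1 - R 0 1 * R 1 0

def condS (μ : V) (R : Matrix (Fin 2) (Fin 2) ℝ) : Prop :=
  R 1 1 * μ 0 - R 0 1 * μ 1 < 0 ∧ R 0 0 * μ 1 - R 1 0 * μ 0 < 0

def pvec1 (R : Matrix (Fin 2) (Fin 2) ℝ) : V := ![R 1 1, -(R 0 1)]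
def pvec2 (R : Matrix (Fin 2) (Fin 2) ℝ) : V := ![-(R 1 0), R 0 0]

def θray1 (S : Matrix (Fin 2) (Fin 2) ℝ) (μ : V) (R : Matrix (Fin 2) (Fin 2) ℝ) : V :=
  (-2 * (μ ⬝ᵥ pvec1 R) / (pvec1 R ⬝ᵥ S.mulVec (pvec1 R))) • pvec1 R

def θray2 (S : Matrix (Fin 2) (Fin 2) ℝ) (μ : V) (R : Matrix (Fin 2) (Fin 2) ℝ) : V :=
  (-2 * (μ ⬝ᵥ pvec2 R) / (pvec2 R ⬝ᵥ S.mulVec (pvec2 R))) • pvec2 R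

def Gam (S : Matrix (Fin 2) (Fin 2) ℝ) (μ : V) : Set V := {θ | 0 < gam S μ θ}

def ltc (θ θ' : V) : Prop := ∀ i, θ i < θ' i

def Gmax (S : Matrix (Fin 2) (Fin 2) ℝ) (μ : V) : Set V :=
  {θ | ∃ θ' ∈ Gam S μ, ltc θ θ'}

def Dset (S : Matrix (Fin 2) (Fin 2) ℝ) (μ : V) (i : Fin 2) (c : ℝ) : Set V :=
  {θ | ∃ θ' ∈ Gam S μ, ltc θ θ' ∧ θ' i < c}

/-!
`Γ` is the interior of an ellipse through the origin: `{gam ≥ 0}` is convex and `gam` is positive on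
the open segment from the origin to any other point of `∂Γ`. So `τ_i` is squeezed between the `i`-th
coordinate of a point `z ∈ ∂Γ` lying below the caps `c = (θ^(1,Γ)₁, θ^(2,Γ)₂)` and any bound on the
`i`-th coordinate of the points of `Γ` below the caps.

In Category I, `z = θ^(1,Γ)` resp. `θ^(2,Γ)` and the caps are the bounds. In Category II,
`θ^(2,Γ) = θ^(2,r)`, and comparing `θ^(2,r)` with `θ^(1,r)` shows that `γ` increases to the right at
`θ^(2,r)`: it is the left end of its horizontal chord of `∂Γ`. The right end `z = θ̃^(2,r)` then
bounds the first coordinate of every point of `Γ` below that height, because the segment from such a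
point to `θ^(1,max)` crosses the chord's height inside `{gam ≥ 0}`. Category III is Category II with
the two coordinates exchanged.
-/

open Filter Topology

section

variable {S : Matrix (Fin 2) (Fin 2) ℝ} {μ : V}

/-- `-∇ gam S μ θ`, for symmetric `S`. -/
def negGrad (S : Matrix (Fin 2) (Fin 2) ℝ) (μ θ : V) : V := S *ᵥ θ + μ

lemma Matrix.PosDef.apply_one_zero (hS : S.PosDef) : S 1 0 = S 0 1 := by
  simpa using hS.isHermitian.apply 0 1

lemma Matrix.PosDef.dotProduct_mulVec_self_pos (hS : S.PosDef) {x : V} (hx : x ≠ 0) :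
    0 < x ⬝ᵥ S *ᵥ x := by
  simpa using hS.dotProduct_mulVec_pos hx

lemma gam_zero : gam S μ 0 = 0 := by simp [gam]

lemma gam_add (hS : S.PosDef) (θ d : V) :
    gam S μ (θ + d) = gam S μ θ - negGrad S μ θ ⬝ᵥ d - 1 / 2 * (d ⬝ᵥ S *ᵥ d) := by
  simp only [gam, negGrad, dotProduct, mulVec, Fin.sum_univ_two, Pi.add_apply,
    hS.apply_one_zero]
  ring

lemma gam_add_smul_sub (θ θ' : V) (t : ℝ) :
    gam S μ (θ + t • (θ' - θ)) = (1 - t) * gam S μ θ + t * gam S μ θ' +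
      t * (1 - t) / 2 * ((θ' - θ) ⬝ᵥ S *ᵥ (θ' - θ)) := by
  simp only [gam, dotProduct, mulVec, Fin.sum_univ_two, Pi.add_apply, Pi.smul_apply,
    Pi.sub_apply, smul_eq_mul]
  ring

lemma gam_smul (θ : V) (t : ℝ) :
    gam S μ (t • θ) = t * gam S μ θ + t * (1 - t) / 2 * (θ ⬝ᵥ S *ᵥ θ) := by
  simpa [gam_zero] using gam_add_smul_sub (S := S) (μ := μ) 0 θ t

lemma convex_setOf_gam_nonneg (hS : S.PosDef) : Convex ℝ {θ | 0 ≤ gam S μ θ} := by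
  intro θ (hθ : 0 ≤ gam S μ θ) θ' (hθ' : 0 ≤ gam S μ θ') a b ha hb hab
  obtain rfl : a = 1 - b := by linarith
  have hQ : 0 ≤ (θ' - θ) ⬝ᵥ S *ᵥ (θ' - θ) := by
    simpa using hS.posSemidef.dotProduct_mulVec_nonneg (θ' - θ)
  show 0 ≤ gam S μ ((1 - b) • θ + b • θ')
  rw [show (1 - b) • θ + b • θ' = θ + b • (θ' - θ) by module, gam_add_smul_sub]
  have : 0 ≤ b * (1 - b) / 2 * ((θ' - θ) ⬝ᵥ S *ᵥ (θ' - θ)) := by positivity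
  nlinarith

lemma gam_add_smul_single (hS : S.PosDef) (θ : V) (i : Fin 2) (c : ℝ) :
    gam S μ (θ + c • Pi.single i 1) = gam S μ θ - c * negGrad S μ θ i - c ^ 2 / 2 * S i i := by
  rw [gam_add hS]
  simp only [dotProduct_smul, smul_dotProduct, mulVec_smul, dotProduct_single, single_dotProduct,
    mulVec_single, MulOpposite.op_one, one_smul, col_apply, smul_eq_mul, mul_one]
  ring

lemma exists_pos_gam_add_smul_single_eq_zero (hS : S.PosDef) {θ : V} (hθ : 0 < gam S μ θ)
    (i : Fin 2) : ∃ c : ℝ, 0 < c ∧ gam S μ (θ + c • Pi.single i 1) = 0 := by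
  set g := negGrad S μ θ i
  have hs : 0 < S i i := hS.diag_pos
  set r := √(g ^ 2 + 2 * S i i * gam S μ θ)
  have hr : r ^ 2 = g ^ 2 + 2 * S i i * gam S μ θ := Real.sq_sqrt (by positivity)
  have hgr : g < r := by nlinarith [Real.sqrt_nonneg (g ^ 2 + 2 * S i i * gam S μ θ)]
  refine ⟨(r - g) / S i i, div_pos (by linarith) hs, ?_⟩
  rw [gam_add_smul_single hS]
  field_simp
  linear_combination -hr

def IsMaxCoord (S : Matrix (Fin 2) (Fin 2) ℝ) (μ : V) (i : Fin 2) (m : V) : Prop :=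
  gam S μ m = 0 ∧ ∀ θ, gam S μ θ = 0 → θ i ≤ m i

namespace IsMaxCoord

variable {i : Fin 2} {m θ : V}

lemma lt_of_gam_pos (hS : S.PosDef) (hm : IsMaxCoord S μ i m) (hθ : 0 < gam S μ θ) :
    θ i < m i := by
  obtain ⟨c, hc, hθc⟩ := exists_pos_gam_add_smul_single_eq_zero hS hθ i
  have := hm.2 _ hθc
  simp only [Pi.add_apply, Pi.smul_apply, Pi.single_eq_same, smul_eq_mul, mul_one] at this
  linarith

lemma le_of_gam_nonneg (hS : S.PosDef) (hm : IsMaxCoord S μ i m) (hθ : 0 ≤ gam S μ θ) :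
    θ i ≤ m i :=
  hθ.eq_or_lt.elim (fun h => hm.2 θ h.symm) (fun h => (hm.lt_of_gam_pos hS h).le)

lemma negGrad_eq_zero (hS : S.PosDef) (hm : IsMaxCoord S μ i m) {j : Fin 2} (hji : j ≠ i) :
    negGrad S μ m j = 0 := by
  by_contra hg
  have hs : 0 < S j j := hS.diag_pos
  have hpos : 0 < gam S μ (m + (-negGrad S μ m j / S j j) • Pi.single j 1) := by
    rw [gam_add_smul_single hS, hm.1]
    have : 0 < negGrad S μ m j ^ 2 / (2 * S j j) := by positivity
    convert this using 1
    field_simp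
    ring
  have := hm.lt_of_gam_pos hS hpos
  simp [Pi.single_eq_of_ne hji.symm] at this

lemma eq_of_apply_eq (hS : S.PosDef) (hm : IsMaxCoord S μ i m) (hθ : gam S μ θ = 0)
    (hθi : θ i = m i) : θ = m := by
  by_contra hne
  have hQ := hS.dotProduct_mulVec_self_pos (sub_ne_zero.mpr (Ne.symm hne))
  have hmid : 0 < gam S μ (θ + (1 / 2 : ℝ) • (m - θ)) := by
    rw [gam_add_smul_sub, hθ, hm.1]
    nlinarith
  have := hm.lt_of_gam_pos hS hmid
  simp [hθi] at this

end IsMaxCoord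

lemma eq_zero_of_negGrad_eq_zero (hS : S.PosDef) {m : V} (hm : gam S μ m = 0)
    (hg : negGrad S μ m = 0) : μ = 0 := by
  have h0 := gam_add (μ := μ) hS m (-m)
  rw [add_neg_cancel, gam_zero, hm, hg, zero_dotProduct] at h0
  have hm0 : m = 0 := by
    by_contra hne
    have := hS.dotProduct_mulVec_self_pos (neg_ne_zero.mpr hne)
    linarith
  simpa [negGrad, hm0] using hg

lemma IsMaxCoord.ne (hS : S.PosDef) (hμ : μ ≠ 0) {m M : V} (hm : IsMaxCoord S μ 0 m)
    (hM : IsMaxCoord S μ 1 M) : m ≠ M := by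
  rintro rfl
  refine hμ (eq_zero_of_negGrad_eq_zero hS hm.1 (funext fun j => ?_))
  fin_cases j
  · exact hM.negGrad_eq_zero hS (by decide)
  · exact hm.negGrad_eq_zero hS (by decide)

lemma coord_le_of_negGrad_nonneg (hS : S.PosDef) {z p : V} (hz : gam S μ z = 0)
    (hgz : 0 ≤ negGrad S μ z 0) (hp : 0 ≤ gam S μ p) (hpz : p 1 = z 1) : p 0 ≤ z 0 := by
  have hp_eq : p = z + (p 0 - z 0) • Pi.single 0 1 := by
    ext j; fin_cases j <;> simp [hpz]
  rw [hp_eq, gam_add_smul_single hS, hz] at hp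
  have hs : 0 < S 0 0 := hS.diag_pos
  by_contra! h
  nlinarith [mul_nonneg (sub_pos.mpr h).le hgz, mul_pos (pow_pos (sub_pos.mpr h) 2) hs]

lemma IsMaxCoord.coord_le_of_negGrad_nonneg (hS : S.PosDef) {m z p : V}
    (hm : IsMaxCoord S μ 0 m) (hz : gam S μ z = 0) (hgz : 0 ≤ negGrad S μ z 0)
    (hzm : z 1 ≤ m 1) (hp : 0 ≤ gam S μ p) (hpz : p 1 ≤ z 1) : p 0 ≤ z 0 := by
  rcases hpz.eq_or_lt with hpz | hpz
  · exact _root_.coord_le_of_negGrad_nonneg hS hz hgz hp hpz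
  -- the segment from `p` to `m` crosses the height `z 1` inside `Γ̄`, weakly right of `p`
  set t := (z 1 - p 1) / (m 1 - p 1)
  have hmp : 0 < m 1 - p 1 := by linarith
  have ht0 : 0 ≤ t := div_nonneg (by linarith) hmp.le
  have ht1 : t ≤ 1 := (div_le_one hmp).mpr (by linarith)
  have hq : 0 ≤ gam S μ (p + t • (m - p)) :=
    (convex_setOf_gam_nonneg hS).add_smul_sub_mem hp hm.1.ge ⟨ht0, ht1⟩
  have hq1 : (p + t • (m - p)) 1 = z 1 := by
    simp only [Pi.add_apply, Pi.smul_apply, Pi.sub_apply, smul_eq_mul, t]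
    field_simp
    ring
  have hqz := _root_.coord_le_of_negGrad_nonneg hS hz hgz hq hq1
  have hpm := hm.le_of_gam_nonneg hS hp
  simp only [Pi.add_apply, Pi.smul_apply, Pi.sub_apply, smul_eq_mul] at hqz
  nlinarith [mul_nonneg ht0 (sub_nonneg.mpr hpm)]

lemma negGrad_eq_neg_of_chord (hS : S.PosDef) {u z : V} (hu : gam S μ u = 0)
    (hz : gam S μ z = 0) (h1 : z 1 = u 1) (h0 : z 0 ≠ u 0) :
    negGrad S μ z 0 = -negGrad S μ u 0 := by
  have hz_eq : z = u + (z 0 - u 0) • Pi.single 0 1 := by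
    ext j; fin_cases j <;> simp [h1]
  have hroot := gam_add_smul_single (μ := μ) hS u 0 (z 0 - u 0)
  rw [← hz_eq, hz, hu] at hroot
  have hgrad : negGrad S μ z 0 = negGrad S μ u 0 + S 0 0 * (z 0 - u 0) := by
    simp only [negGrad, mulVec, dotProduct, Fin.sum_univ_two, Pi.add_apply, h1]
    ring
  have hd : z 0 - u 0 ≠ 0 := sub_ne_zero.mpr h0
  have : negGrad S μ u 0 = -(S 0 0 * (z 0 - u 0)) / 2 := by
    apply mul_left_cancel₀ hd
    linear_combination hroot
  rw [hgrad, this]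
  ring

lemma negGrad_mul_cross_pos (hS : S.PosDef) {u w : V} (hu : gam S μ u = 0)
    (hw : gam S μ w = 0) (hne : u ≠ w) (hu1 : 0 < u 1) (huw : u 1 ≤ w 1) :
    0 < negGrad S μ u 0 * (u 0 * w 1 - u 1 * w 0) := by
  have hdw := gam_add (μ := μ) hS u (w - u)
  have hd0 := gam_add (μ := μ) hS u (-u)
  rw [add_sub_cancel, hu, hw] at hdw
  rw [add_neg_cancel, gam_zero, hu] at hd0
  have hQd := hS.dotProduct_mulVec_self_pos (sub_ne_zero.mpr hne.symm)
  have hQu : 0 ≤ -u ⬝ᵥ S *ᵥ -u := by simpa using hS.posSemidef.dotProduct_mulVec_nonneg (-u)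
  set A := (w - u) ⬝ᵥ S *ᵥ (w - u)
  set B := -u ⬝ᵥ S *ᵥ -u
  set g := negGrad S μ u
  simp only [dotProduct, Fin.sum_univ_two, Pi.sub_apply, Pi.neg_apply] at hdw hd0
  -- `g ⬝ᵥ (w - u) < 0 ≤ g ⬝ᵥ u` since `w` and `0` lie on `∂Γ`; the cross term combines the two
  have key : g 0 * (u 0 * w 1 - u 1 * w 0) = (w 1 - u 1) * (B / 2) + u 1 * (A / 2) := by
    linear_combination -(w 1 - u 1) * hd0 - u 1 * hdw
  rw [key]
  have : 0 ≤ (w 1 - u 1) * (B / 2) := mul_nonneg (by linarith) (by linarith)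
  nlinarith

variable {R : Matrix (Fin 2) (Fin 2) ℝ}

lemma ne_zero_of_condS (hSc : condS μ R) : μ ≠ 0 := by
  rintro rfl
  simp [condS] at hSc

lemma gam2_pos_of_gam1_eq_zero (hP : condP R) {u : V} (hu : gam1 R u = 0) (hu1 : 0 < u 1) :
    0 < gam2 R u := by
  obtain ⟨h00, -, hdet⟩ := hP
  have : R 0 0 * gam2 R u = (R 0 0 * R 1 1 - R 0 1 * R 1 0) * u 1 := by
    simp only [gam1, gam2] at hu ⊢
    linear_combination R 0 1 * hu
  exact pos_of_mul_pos_right (this ▸ mul_pos hdet hu1) h00.le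

lemma gam1_pos_of_gam2_eq_zero (hP : condP R) {w : V} (hw : gam2 R w = 0) (hw0 : 0 < w 0) :
    0 < gam1 R w := by
  obtain ⟨-, h11, hdet⟩ := hP
  have : R 1 1 * gam1 R w = (R 0 0 * R 1 1 - R 0 1 * R 1 0) * w 0 := by
    simp only [gam1, gam2] at hw ⊢
    linear_combination R 1 0 * hw
  exact pos_of_mul_pos_right (this ▸ mul_pos hdet hw0) h11.le

lemma cross_neg_of_gam1_eq_zero (hP : condP R) {u w : V} (hu : gam1 R u = 0) (hu1 : 0 < u 1)
    (hw : 0 < gam1 R w) : u 0 * w 1 - u 1 * w 0 < 0 := by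
  have : R 0 0 * (u 0 * w 1 - u 1 * w 0) = -(u 1 * gam1 R w) := by
    simp only [gam1] at hu ⊢
    linear_combination w 1 * hu
  nlinarith [hP.1, mul_pos hu1 hw]

lemma cross_pos_of_gam2_eq_zero (hP : condP R) {w m : V} (hw : gam2 R w = 0) (hw0 : 0 < w 0)
    (hm : 0 < gam2 R m) : 0 < w 0 * m 1 - w 1 * m 0 := by
  have : R 1 1 * (w 0 * m 1 - w 1 * m 0) = w 0 * gam2 R m := by
    simp only [gam2] at hw ⊢
    linear_combination -m 0 * hw
  nlinarith [hP.2.1, mul_pos hw0 hm]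

section Rays

variable {p : V}

lemma gam_ray_eq_zero (hS : S.PosDef) (hp : p ≠ 0) :
    gam S μ ((-2 * (μ ⬝ᵥ p) / (p ⬝ᵥ S *ᵥ p)) • p) = 0 := by
  have hQ := (hS.dotProduct_mulVec_self_pos hp).ne'
  rw [gam_smul, gam]
  field_simp
  ring

lemma ray_coeff_pos (hS : S.PosDef) (hp : p ≠ 0) (hμp : μ ⬝ᵥ p < 0) :
    0 < -2 * (μ ⬝ᵥ p) / (p ⬝ᵥ S *ᵥ p) :=
  div_pos (by linarith) (hS.dotProduct_mulVec_self_pos hp)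

lemma pvec1_ne_zero (hP : condP R) : pvec1 R ≠ 0 := fun h => by
  simpa [pvec1, hP.2.1.ne'] using congrFun h 0

lemma pvec2_ne_zero (hP : condP R) : pvec2 R ≠ 0 := fun h => by
  simpa [pvec2, hP.1.ne'] using congrFun h 1

lemma gam2_θray1 : gam2 R (θray1 S μ R) = 0 := by
  simp only [gam2, θray1, pvec1, Pi.smul_apply, smul_eq_mul, cons_val_zero, cons_val_one,
    cons_val_fin_one]
  ring

lemma gam1_θray2 : gam1 R (θray2 S μ R) = 0 := by
  simp only [gam1, θray2, pvec2, Pi.smul_apply, smul_eq_mul, cons_val_zero, cons_val_one,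
    cons_val_fin_one]
  ring

lemma gam_θray1 (hS : S.PosDef) (hP : condP R) : gam S μ (θray1 S μ R) = 0 :=
  gam_ray_eq_zero hS (pvec1_ne_zero hP)

lemma gam_θray2 (hS : S.PosDef) (hP : condP R) : gam S μ (θray2 S μ R) = 0 :=
  gam_ray_eq_zero hS (pvec2_ne_zero hP)

lemma θray1_zero_pos (hS : S.PosDef) (hP : condP R) (hSc : condS μ R) :
    0 < θray1 S μ R 0 := by
  have hμp : μ ⬝ᵥ pvec1 R < 0 := by
    simpa [pvec1, dotProduct, Fin.sum_univ_two, mul_comm, sub_eq_add_neg] using hSc.1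
  simpa [θray1, pvec1] using mul_pos (ray_coeff_pos hS (pvec1_ne_zero hP) hμp) hP.2.1

lemma θray2_one_pos (hS : S.PosDef) (hP : condP R) (hSc : condS μ R) :
    0 < θray2 S μ R 1 := by
  have hμp : μ ⬝ᵥ pvec2 R < 0 := by
    simpa [pvec2, dotProduct, Fin.sum_univ_two, mul_comm, sub_eq_add_neg, add_comm] using hSc.2
  simpa [θray2, pvec2] using mul_pos (ray_coeff_pos hS (pvec2_ne_zero hP) hμp) hP.1

end Rays

/-- `θ^(1,Γ)` of the paper, for `m = θ^(1,max)`. -/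
def θGam1 (S : Matrix (Fin 2) (Fin 2) ℝ) (μ : V) (R : Matrix (Fin 2) (Fin 2) ℝ) (m : V) : V :=
  if gam2 R m ≤ 0 then m else θray1 S μ R

/-- `θ^(2,Γ)` of the paper, for `M = θ^(2,max)`. -/
def θGam2 (S : Matrix (Fin 2) (Fin 2) ℝ) (μ : V) (R : Matrix (Fin 2) (Fin 2) ℝ) (M : V) : V :=
  if gam1 R M ≤ 0 then M else θray2 S μ R

section Category

variable {m M : V}

lemma gam_θGam1 (hS : S.PosDef) (hP : condP R) (hm : gam S μ m = 0) :
    gam S μ (θGam1 S μ R m) = 0 := by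
  unfold θGam1; split_ifs
  exacts [hm, gam_θray1 hS hP]

lemma gam_θGam2 (hS : S.PosDef) (hP : condP R) (hM : gam S μ M = 0) :
    gam S μ (θGam2 S μ R M) = 0 := by
  unfold θGam2; split_ifs
  exacts [hM, gam_θray2 hS hP]

lemma θGam1_zero_pos (hS : S.PosDef) (hP : condP R) (hSc : condS μ R)
    (hm : IsMaxCoord S μ 0 m) : 0 < θGam1 S μ R m 0 := by
  have hw := θray1_zero_pos hS hP hSc
  unfold θGam1; split_ifs
  exacts [hw.trans_le (hm.2 _ (gam_θray1 hS hP)), hw]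

lemma θGam2_one_pos (hS : S.PosDef) (hP : condP R) (hSc : condS μ R)
    (hM : IsMaxCoord S μ 1 M) : 0 < θGam2 S μ R M 1 := by
  have hu := θray2_one_pos hS hP hSc
  unfold θGam2; split_ifs
  exacts [hu.trans_le (hM.2 _ (gam_θray2 hS hP)), hu]

lemma gam1_pos_of_θGam2_le (hS : S.PosDef) (hP : condP R) (hSc : condS μ R)
    (hm : IsMaxCoord S μ 0 m) (hM : IsMaxCoord S μ 1 M)
    (hII : θGam2 S μ R M ≤ θGam1 S μ R m) : 0 < gam1 R M := by
  by_contra! hγM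
  rw [θGam2, if_pos hγM] at hII
  have hg := gam_θGam1 hS hP (R := R) hm.1
  have hM_eq : θGam1 S μ R m = M :=
    hM.eq_of_apply_eq hS hg (le_antisymm (hM.2 _ hg) (hII 1))
  unfold θGam1 at hM_eq
  split_ifs at hM_eq
  · exact hm.ne hS (ne_zero_of_condS hSc) hM hM_eq
  · have := gam1_pos_of_gam2_eq_zero hP gam2_θray1 (θray1_zero_pos hS hP hSc)
    rw [hM_eq] at this
    linarith

lemma mem_Icc_of_gam_smul_nonneg (hS : S.PosDef) {w : V} (hw : gam S μ w = 0) (hw0 : w ≠ 0)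
    {s : ℝ} (h : 0 ≤ gam S μ (s • w)) : s ∈ Icc 0 1 := by
  have hQ := hS.dotProduct_mulVec_self_pos hw0
  rw [gam_smul, hw] at h
  have : 0 ≤ s * (1 - s) := by nlinarith
  constructor <;> nlinarith

lemma eq_smul_of_gam2_eq_zero (hP : condP R) {q w : V} (hq : gam2 R q = 0)
    (hw : gam2 R w = 0) (hw0 : w 0 ≠ 0) : q = (q 0 / w 0) • w := by
  have h11 := hP.2.1.ne'
  ext j; fin_cases j
  · simp [hw0]
  · simp only [gam2] at hq hw
    simp only [Fin.mk_one, Fin.isValue, Pi.smul_apply, smul_eq_mul]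
    field_simp
    apply mul_left_cancel₀ h11
    linear_combination w 0 * hq - q 0 * hw

lemma le_θray1_of_le (hS : S.PosDef) (hP : condP R) (hSc : condS μ R) {u m : V}
    (hu : 0 ≤ gam S μ u) (hm : 0 ≤ gam S μ m) (hum : u ≤ m) (hγm : gam2 R m ≤ 0)
    (hγu : 0 < gam2 R u) (hu1 : 0 < u 1) : u ≤ θray1 S μ R := by
  set w := θray1 S μ R
  have hw0 : 0 < w 0 := θray1_zero_pos hS hP hSc
  -- `q` is where the segment from `u` to `m` meets the line `γ₂ = 0`, on which `{gam ≥ 0}` is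
  -- the segment from `0` to `θray1`
  set t := gam2 R u / (gam2 R u - gam2 R m)
  have hden : 0 < gam2 R u - gam2 R m := by linarith
  have ht0 : 0 ≤ t := div_nonneg hγu.le hden.le
  have ht1 : t ≤ 1 := (div_le_one hden).mpr (by linarith)
  set q := u + t • (m - u)
  have hq : 0 ≤ gam S μ q := (convex_setOf_gam_nonneg hS).add_smul_sub_mem hu hm ⟨ht0, ht1⟩
  have hq_line : gam2 R q = 0 := by
    simp only [gam2, q, t, Pi.add_apply, Pi.smul_apply, Pi.sub_apply, smul_eq_mul] at hden ⊢
    field_simp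
    ring
  have huq : u ≤ q := fun i => by
    simpa [q] using mul_nonneg ht0 (sub_nonneg.mpr (hum i))
  set s := q 0 / w 0
  have hqs : q = s • w := eq_smul_of_gam2_eq_zero hP hq_line gam2_θray1 hw0.ne'
  have hs : s ∈ Icc 0 1 := mem_Icc_of_gam_smul_nonneg hS (gam_θray1 hS hP)
    (fun h => hw0.ne' (congrFun h 0)) (hqs ▸ hq)
  have hw1 : 0 < w 1 := by
    have : 0 < s * w 1 := by simpa [hqs] using hu1.trans_le (huq 1)
    exact pos_of_mul_pos_right this hs.1
  intro i
  calc u i ≤ q i := huq i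
    _ = s * w i := by rw [hqs]; rfl
    _ ≤ w i := mul_le_of_le_one_left (by fin_cases i; exacts [hw0.le, hw1.le]) hs.2

lemma apply_one_lt_of_gam2_pos (hP : condP R) {w m : V} (hw : gam2 R w = 0) (hw0 : 0 < w 0)
    (hw1 : 0 < w 1) (hwm : w 0 ≤ m 0) (hm : 0 < gam2 R m) : w 1 < m 1 := by
  obtain ⟨-, h11, -⟩ := hP
  simp only [gam2] at hw hm
  have h01 : R 0 1 < 0 := by nlinarith
  nlinarith

lemma θray2_le_of_categoryII (hS : S.PosDef) (hP : condP R) (hSc : condS μ R)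
    (hm : IsMaxCoord S μ 0 m) (hM : IsMaxCoord S μ 1 M)
    (hII : θGam2 S μ R M ≤ θGam1 S μ R m) :
    θray2 S μ R ≤ θray1 S μ R ∧ θray2 S μ R 1 ≤ m 1 := by
  have hu1 := θray2_one_pos hS hP hSc
  rw [θGam2, if_neg (gam1_pos_of_θGam2_le hS hP hSc hm hM hII).not_ge, θGam1] at hII
  split_ifs at hII with hγm
  · exact ⟨le_θray1_of_le hS hP hSc (gam_θray2 hS hP).ge hm.1.ge hII hγm
      (gam2_pos_of_gam1_eq_zero hP gam1_θray2 hu1) hu1, hII 1⟩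
  · refine ⟨hII, (hII 1).trans (apply_one_lt_of_gam2_pos hP gam2_θray1
      (θray1_zero_pos hS hP hSc) (hu1.trans_le (hII 1)) (hm.2 _ (gam_θray1 hS hP))
      (not_le.mp hγm)).le⟩

lemma negGrad_θray2_neg (hS : S.PosDef) (hP : condP R) (hSc : condS μ R)
    (huw : θray2 S μ R ≤ θray1 S μ R) : negGrad S μ (θray2 S μ R) 0 < 0 := by
  have hu1 := θray2_one_pos hS hP hSc
  have hγw := gam1_pos_of_gam2_eq_zero hP gam2_θray1 (θray1_zero_pos hS hP hSc)
  have hne : θray2 S μ R ≠ θray1 S μ R := fun h => by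
    have := gam1_θray2 (S := S) (μ := μ) (R := R)
    rw [h] at this
    linarith
  exact neg_of_mul_pos_left
    (negGrad_mul_cross_pos hS (gam_θray2 hS hP) (gam_θray1 hS hP) hne hu1 (huw 1))
    (cross_neg_of_gam1_eq_zero hP gam1_θray2 hu1 hγw).le

lemma negGrad_θray1_pos (hS : S.PosDef) (hP : condP R) (hSc : condS μ R)
    (hm : IsMaxCoord S μ 0 m) (hγm : 0 < gam2 R m) (hw1 : 0 < θray1 S μ R 1) :
    0 < negGrad S μ (θray1 S μ R) 0 := by
  have hw0 := θray1_zero_pos hS hP hSc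
  have hwm := apply_one_lt_of_gam2_pos hP gam2_θray1 hw0 hw1 (hm.2 _ (gam_θray1 hS hP)) hγm
  exact pos_of_mul_pos_left
    (negGrad_mul_cross_pos hS (gam_θray1 hS hP) hm.1 (fun h => hwm.ne (by rw [h])) hw1 hwm.le)
    (cross_pos_of_gam2_eq_zero hP gam2_θray1 hw0 hγm).le

end Category

lemma IsMaxCoord.negGrad_nonneg_of_chord (hS : S.PosDef) {M u z : V}
    (hM : IsMaxCoord S μ 1 M) (hu : gam S μ u = 0) (hgu : negGrad S μ u 0 ≤ 0)
    (hz : (u = M ∧ z = M) ∨ (gam S μ z = 0 ∧ z 1 = u 1 ∧ z 0 ≠ u 0)) :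
    gam S μ z = 0 ∧ z 1 = u 1 ∧ 0 ≤ negGrad S μ z 0 := by
  rcases hz with ⟨rfl, rfl⟩ | ⟨hz, h1, h0⟩
  · exact ⟨hM.1, rfl, (hM.negGrad_eq_zero hS (by decide)).ge⟩
  · exact ⟨hz, h1, by rw [negGrad_eq_neg_of_chord hS hu hz h1 h0]; linarith⟩

lemma apply_zero_le_θGam1 (hS : S.PosDef) (hP : condP R) (hSc : condS μ R) {m z : V}
    (hm : IsMaxCoord S μ 0 m) (hz : gam S μ z = 0) (hz1 : 0 < z 1)
    (hzw : z 1 ≤ θray1 S μ R 1) : z 0 ≤ θGam1 S μ R m 0 := by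
  unfold θGam1
  split_ifs with hγm
  · exact hm.2 z hz
  have hw1 := hz1.trans_le hzw
  have hwm := apply_one_lt_of_gam2_pos hP gam2_θray1 (θray1_zero_pos hS hP hSc) hw1
    (hm.2 _ (gam_θray1 hS hP)) (not_le.mp hγm)
  exact hm.coord_le_of_negGrad_nonneg hS (gam_θray1 hS hP)
    (negGrad_θray1_pos hS hP hSc hm (not_le.mp hγm) hw1).le hwm.le hz.ge hzw

section Supremum

/-- The set whose supremum is `τ_i`, for the caps `c₁ = θ^(1,Γ)₁`, `c₂ = θ^(2,Γ)₂`. -/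
def tauSet (S : Matrix (Fin 2) (Fin 2) ℝ) (μ : V) (c1 c2 : ℝ) (i : Fin 2) : Set ℝ :=
  (fun θ : V => θ i) '' (Dset S μ 0 c1 ∩ Dset S μ 1 c2)

variable {c1 c2 : ℝ} {θ : V}

lemma lt_of_mem_Dset {j : Fin 2} {c : ℝ} (h : θ ∈ Dset S μ j c) : θ j < c := by
  obtain ⟨θ', -, hlt, hc⟩ := h
  exact (hlt j).trans hc

lemma le_of_mem_Dset {i j : Fin 2} {c K : ℝ} (h : θ ∈ Dset S μ j c)
    (hK : ∀ y ∈ Gam S μ, y j < c → y i ≤ K) : θ i ≤ K := by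
  obtain ⟨θ', hθ', hlt, hc⟩ := h
  exact (hlt i).le.trans (hK θ' hθ' hc)

lemma bddAbove_tauSet (i : Fin 2) : BddAbove (tauSet S μ c1 c2 i) := by
  refine ⟨max c1 c2, ?_⟩
  rintro _ ⟨θ, ⟨h0, h1⟩, rfl⟩
  fin_cases i
  · exact (lt_of_mem_Dset h0).le.trans (le_max_left _ _)
  · exact (lt_of_mem_Dset h1).le.trans (le_max_right _ _)

lemma mem_tauSet_of_gam_eq_zero (hS : S.PosDef) (hc1 : 0 < c1) (hc2 : 0 < c2) {z : V}
    (hz : gam S μ z = 0) (hz0 : z ≠ 0) (hzc1 : z 0 ≤ c1) (hzc2 : z 1 ≤ c2) {t : ℝ}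
    (ht : t ∈ Ioo 0 1) (i : Fin 2) : t * z i - (1 - t) ∈ tauSet S μ c1 c2 i := by
  obtain ⟨ht0, ht1⟩ := ht
  have hΓ : t • z ∈ Gam S μ := by
    have hQ := hS.dotProduct_mulVec_self_pos hz0
    change 0 < gam S μ (t • z)
    rw [gam_smul, hz]
    have : 0 < t * (1 - t) / 2 := by nlinarith
    nlinarith
  have hlt : ltc (fun j => t * z j - (1 - t)) (t • z) := fun j => by
    simp only [Pi.smul_apply, smul_eq_mul]; linarith
  refine ⟨fun j => t * z j - (1 - t), ⟨⟨t • z, hΓ, hlt, ?_⟩, ⟨t • z, hΓ, hlt, ?_⟩⟩, rfl⟩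
  · simp only [Pi.smul_apply, smul_eq_mul]; nlinarith
  · simp only [Pi.smul_apply, smul_eq_mul]; nlinarith

lemma sSup_tauSet_eq (hS : S.PosDef) (hc1 : 0 < c1) (hc2 : 0 < c2) {z : V}
    (hz : gam S μ z = 0) (hz0 : z ≠ 0) (hzc1 : z 0 ≤ c1) (hzc2 : z 1 ≤ c2) (i : Fin 2)
    (hub : ∀ θ ∈ Dset S μ 0 c1 ∩ Dset S μ 1 c2, θ i ≤ z i) :
    sSup (tauSet S μ c1 c2 i) = z i := by
  have hmem : ∀ t ∈ Ioo (0 : ℝ) 1, t * z i - (1 - t) ∈ tauSet S μ c1 c2 i :=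
    fun t ht => mem_tauSet_of_gam_eq_zero hS hc1 hc2 hz hz0 hzc1 hzc2 ht i
  refine le_antisymm (csSup_le ⟨_, hmem _ ⟨one_half_pos, one_half_lt_one⟩⟩ ?_) ?_
  · rintro _ ⟨θ, hθ, rfl⟩
    exact hub θ hθ
  · have hlim : Tendsto (fun t : ℝ => t * z i - (1 - t)) (𝓝[<] 1) (𝓝 (z i)) := by
      have : Continuous fun t : ℝ => t * z i - (1 - t) := by fun_prop
      simpa using (this.tendsto 1).mono_left nhdsWithin_le_nhds
    refine le_of_tendsto hlim ?_
    filter_upwards [Ioo_mem_nhdsLT one_pos] with t ht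
    exact le_csSup (bddAbove_tauSet i) (hmem t ht)

end Supremum

variable {m M : V}

theorem sSup_tauSet_of_categoryI (hS : S.PosDef) (hP : condP R) (hSc : condS μ R)
    (hm : IsMaxCoord S μ 0 m) (hM : IsMaxCoord S μ 1 M)
    (h0 : θGam2 S μ R M 0 ≤ θGam1 S μ R m 0) (h1 : θGam1 S μ R m 1 ≤ θGam2 S μ R M 1) :
    sSup (tauSet S μ (θGam1 S μ R m 0) (θGam2 S μ R M 1) 0) = θGam1 S μ R m 0 ∧
      sSup (tauSet S μ (θGam1 S μ R m 0) (θGam2 S μ R M 1) 1) = θGam2 S μ R M 1 := by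
  have hc1 := θGam1_zero_pos hS hP hSc hm
  have hc2 := θGam2_one_pos hS hP hSc hM
  exact ⟨sSup_tauSet_eq hS hc1 hc2 (gam_θGam1 hS hP hm.1) (ne_of_apply_ne (· 0) hc1.ne')
      le_rfl h1 0 fun θ hθ => (lt_of_mem_Dset hθ.1).le,
    sSup_tauSet_eq hS hc1 hc2 (gam_θGam2 hS hP hM.1) (ne_of_apply_ne (· 1) hc2.ne')
      h0 le_rfl 1 fun θ hθ => (lt_of_mem_Dset hθ.2).le⟩

theorem sSup_tauSet_of_categoryII (hS : S.PosDef) (hP : condP R) (hSc : condS μ R) {z : V}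
    (hm : IsMaxCoord S μ 0 m) (hM : IsMaxCoord S μ 1 M)
    (hz : (θray2 S μ R = M ∧ z = M) ∨
      (gam S μ z = 0 ∧ z 1 = θray2 S μ R 1 ∧ z 0 ≠ θray2 S μ R 0))
    (hII : θGam2 S μ R M ≤ θGam1 S μ R m) (i : Fin 2) :
    sSup (tauSet S μ (θGam1 S μ R m 0) (θGam2 S μ R M 1) i) = z i := by
  have hc2 : θGam2 S μ R M = θray2 S μ R :=
    if_neg (gam1_pos_of_θGam2_le hS hP hSc hm hM hII).not_ge
  obtain ⟨huw, hum⟩ := θray2_le_of_categoryII hS hP hSc hm hM hII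
  obtain ⟨hz, hz1, hgz⟩ := hM.negGrad_nonneg_of_chord hS (gam_θray2 hS hP)
    (negGrad_θray2_neg hS hP hSc huw).le hz
  have hu1 := θray2_one_pos hS hP hSc
  have hzc1 := apply_zero_le_θGam1 hS hP hSc hm hz (hz1 ▸ hu1) (hz1 ▸ huw 1)
  have hub0 : ∀ θ ∈ Dset S μ 0 (θGam1 S μ R m 0) ∩ Dset S μ 1 (θGam2 S μ R M 1), θ 0 ≤ z 0 :=
    fun θ hθ => le_of_mem_Dset hθ.2 fun y hy hy1 => hm.coord_le_of_negGrad_nonneg hS hz hgz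
      (hz1 ▸ hum) hy.le (by rw [hz1, ← hc2]; exact hy1.le)
  have hub1 : ∀ θ ∈ Dset S μ 0 (θGam1 S μ R m 0) ∩ Dset S μ 1 (θGam2 S μ R M 1), θ 1 ≤ z 1 :=
    fun θ hθ => (lt_of_mem_Dset hθ.2).le.trans (by rw [hc2, hz1])
  have := sSup_tauSet_eq hS (θGam1_zero_pos hS hP hSc hm) (θGam2_one_pos hS hP hSc hM) hz
    (ne_of_apply_ne (· 1) (hz1 ▸ hu1).ne') hzc1 (by rw [hc2, hz1])
  fin_cases i
  exacts [this 0 hub0, this 1 hub1]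

section Swap

local notation "σ" => Equiv.swap (0 : Fin 2) 1

@[simp] lemma comp_swap_comp_swap (θ : V) : (θ ∘ σ) ∘ σ = θ := by
  ext j; fin_cases j <;> rfl

lemma dotProduct_comp_swap (u v : V) : u ∘ σ ⬝ᵥ v ∘ σ = u ⬝ᵥ v := by
  simp [dotProduct, Fin.sum_univ_two, add_comm]

lemma submatrix_swap_mulVec (v : V) : S.submatrix σ σ *ᵥ (v ∘ σ) = (S *ᵥ v) ∘ σ := by
  simp [submatrix_mulVec_equiv]

lemma gam_swap (θ : V) : gam (S.submatrix σ σ) (μ ∘ σ) (θ ∘ σ) = gam S μ θ := by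
  simp only [gam, dotProduct, mulVec, submatrix_apply, Function.comp_apply, Fin.sum_univ_two,
    Equiv.swap_apply_left, Equiv.swap_apply_right]
  ring

lemma gam1_swap (θ : V) : gam1 (R.submatrix σ σ) (θ ∘ σ) = gam2 R θ := by
  simp only [gam1, gam2, submatrix_apply, Function.comp_apply, Equiv.swap_apply_left,
    Equiv.swap_apply_right]
  ring

lemma gam2_swap (θ : V) : gam2 (R.submatrix σ σ) (θ ∘ σ) = gam1 R θ := by
  simp only [gam1, gam2, submatrix_apply, Function.comp_apply, Equiv.swap_apply_left,
    Equiv.swap_apply_right]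
  ring

lemma condP.swap (hP : condP R) : condP (R.submatrix σ σ) := by
  obtain ⟨h00, h11, hdet⟩ := hP
  simp only [condP, submatrix_apply, Equiv.swap_apply_left, Equiv.swap_apply_right]
  exact ⟨h11, h00, by linarith⟩

lemma condS.swap (hSc : condS μ R) : condS (μ ∘ σ) (R.submatrix σ σ) := by
  obtain ⟨h1, h2⟩ := hSc
  exact ⟨by simpa using h2, by simpa using h1⟩

lemma θray1_swap : θray1 (S.submatrix σ σ) (μ ∘ σ) (R.submatrix σ σ) = θray2 S μ R ∘ σ := by
  have hp : pvec1 (R.submatrix σ σ) = pvec2 R ∘ σ := by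
    ext j; fin_cases j <;> simp [pvec1, pvec2]
  rw [θray1, θray2, hp, submatrix_swap_mulVec, dotProduct_comp_swap, dotProduct_comp_swap]
  rfl

lemma θray2_swap : θray2 (S.submatrix σ σ) (μ ∘ σ) (R.submatrix σ σ) = θray1 S μ R ∘ σ := by
  have hp : pvec2 (R.submatrix σ σ) = pvec1 R ∘ σ := by
    ext j; fin_cases j <;> simp [pvec1, pvec2]
  rw [θray1, θray2, hp, submatrix_swap_mulVec, dotProduct_comp_swap, dotProduct_comp_swap]
  rfl

lemma IsMaxCoord.swap {i : Fin 2} {m : V} (hm : IsMaxCoord S μ i m) :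
    IsMaxCoord (S.submatrix σ σ) (μ ∘ σ) (σ i) (m ∘ σ) := by
  refine ⟨by rw [gam_swap]; exact hm.1, fun θ hθ => ?_⟩
  rw [← comp_swap_comp_swap θ, gam_swap] at hθ
  simpa using hm.2 _ hθ

lemma θGam1_swap {M : V} :
    θGam1 (S.submatrix σ σ) (μ ∘ σ) (R.submatrix σ σ) (M ∘ σ) = θGam2 S μ R M ∘ σ := by
  unfold θGam1 θGam2
  rw [gam2_swap, θray1_swap]
  split_ifs <;> rfl

lemma θGam2_swap {m : V} :
    θGam2 (S.submatrix σ σ) (μ ∘ σ) (R.submatrix σ σ) (m ∘ σ) = θGam1 S μ R m ∘ σ := by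
  unfold θGam1 θGam2
  rw [gam1_swap, θray2_swap]
  split_ifs <;> rfl

lemma mem_Dset_swap {θ : V} {k : Fin 2} {c : ℝ} :
    θ ∈ Dset (S.submatrix σ σ) (μ ∘ σ) k c ↔ θ ∘ σ ∈ Dset S μ (σ k) c := by
  constructor
  · rintro ⟨θ', hθ', hlt, hc⟩
    refine ⟨θ' ∘ σ, ?_, fun j => hlt (σ j), by simpa using hc⟩
    change 0 < gam _ _ θ' at hθ'
    rwa [← comp_swap_comp_swap θ', gam_swap] at hθ'
  · rintro ⟨θ', hθ', hlt, hc⟩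
    refine ⟨θ' ∘ σ, ?_, fun j => by simpa using hlt (σ j), by simpa using hc⟩
    change 0 < gam S μ θ' at hθ'
    change 0 < gam _ _ _
    rwa [gam_swap]

lemma tauSet_swap {c1 c2 : ℝ} (i : Fin 2) :
    tauSet (S.submatrix σ σ) (μ ∘ σ) c2 c1 i = tauSet S μ c1 c2 (σ i) := by
  ext x
  simp only [tauSet, mem_image, mem_inter_iff, mem_Dset_swap]
  constructor
  · rintro ⟨θ, ⟨h0, h1⟩, rfl⟩
    exact ⟨θ ∘ σ, ⟨by simpa using h1, by simpa using h0⟩, by simp⟩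
  · rintro ⟨θ, ⟨h0, h1⟩, rfl⟩
    exact ⟨θ ∘ σ, ⟨by simpa using h1, by simpa using h0⟩, by simp⟩

theorem sSup_tauSet_of_categoryIII (hS : S.PosDef) (hP : condP R) (hSc : condS μ R)
    {m M z : V} (hm : IsMaxCoord S μ 0 m) (hM : IsMaxCoord S μ 1 M)
    (hz : (θray1 S μ R = m ∧ z = m) ∨
      (gam S μ z = 0 ∧ z 0 = θray1 S μ R 0 ∧ z 1 ≠ θray1 S μ R 1))
    (hIII : θGam1 S μ R m ≤ θGam2 S μ R M) (i : Fin 2) :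
    sSup (tauSet S μ (θGam1 S μ R m 0) (θGam2 S μ R M 1) i) = z i := by
  have hz' : (θray2 (S.submatrix σ σ) (μ ∘ σ) (R.submatrix σ σ) = m ∘ σ ∧ z ∘ σ = m ∘ σ) ∨
      (gam (S.submatrix σ σ) (μ ∘ σ) (z ∘ σ) = 0 ∧
        (z ∘ σ) 1 = θray2 (S.submatrix σ σ) (μ ∘ σ) (R.submatrix σ σ) 1 ∧
        (z ∘ σ) 0 ≠ θray2 (S.submatrix σ σ) (μ ∘ σ) (R.submatrix σ σ) 0) := by
    rw [θray2_swap, gam_swap]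
    rcases hz with ⟨h1, h2⟩ | ⟨h1, h2, h3⟩
    · exact Or.inl ⟨by rw [h1], by rw [h2]⟩
    · exact Or.inr ⟨h1, by simpa using h2, by simpa using h3⟩
  have hII : θGam2 (S.submatrix σ σ) (μ ∘ σ) (R.submatrix σ σ) (m ∘ σ) ≤
      θGam1 (S.submatrix σ σ) (μ ∘ σ) (R.submatrix σ σ) (M ∘ σ) := by
    rw [θGam1_swap, θGam2_swap]
    exact fun j => hIII (σ j)
  have := sSup_tauSet_of_categoryII (hS.submatrix (Equiv.injective σ)) hP.swap hSc.swap
    (by simpa using hM.swap) (by simpa using hm.swap) hz' hII (σ i)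
  simpa [θGam1_swap, θGam2_swap, tauSet_swap] using this

end Swap

end

theorem stmt_3_general
    (S R : Matrix (Fin 2) (Fin 2) ℝ) (μ : V)
    (hSpd : S.PosDef)
    (hP : condP R) (hS : condS μ R)
    (θmax1 θmax2 tθ1r tθ2r : V)
    (hmax1 : gam S μ θmax1 = 0 ∧ ∀ θ, gam S μ θ = 0 → θ 0 ≤ θmax1 0)
    (hmax2 : gam S μ θmax2 = 0 ∧ ∀ θ, gam S μ θ = 0 → θ 1 ≤ θmax2 1)
    (htθ1r : (θray1 S μ R = θmax1 ∧ tθ1r = θmax1) ∨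
      (θray1 S μ R ≠ θmax1 ∧ gam S μ tθ1r = 0 ∧
        tθ1r 0 = θray1 S μ R 0 ∧ tθ1r 1 ≠ θray1 S μ R 1))
    (htθ2r : (θray2 S μ R = θmax2 ∧ tθ2r = θmax2) ∨
      (θray2 S μ R ≠ θmax2 ∧ gam S μ tθ2r = 0 ∧
        tθ2r 1 = θray2 S μ R 1 ∧ tθ2r 0 ≠ θray2 S μ R 0))
    (θΓ1 θΓ2 : V)
    (hθΓ1 : θΓ1 = if gam2 R θmax1 ≤ 0 then θmax1 else θray1 S μ R)
    (hθΓ2 : θΓ2 = if gam1 R θmax2 ≤ 0 then θmax2 else θray2 S μ R)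
    (τ : V)
    (hτ : ∀ i, τ i = sSup ((fun θ => θ i) ''
      (Dset S μ 0 (θΓ1 0) ∩ Dset S μ 1 (θΓ2 1)))) :
    -- Category I
    (θΓ2 0 < θΓ1 0 → θΓ1 1 < θΓ2 1 → τ 0 = θΓ1 0 ∧ τ 1 = θΓ2 1) ∧
    -- Category II
    ((∀ i, θΓ2 i ≤ θΓ1 i) → τ = tθ2r) ∧
    -- Category III
    ((∀ i, θΓ1 i ≤ θΓ2 i) → τ = tθ1r) := by
  subst hθΓ1 hθΓ2
  refine ⟨fun h0 h1 => ?_, fun hII => funext fun i => ?_, fun hIII => funext fun i => ?_⟩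
  · rw [hτ 0, hτ 1]
    exact sSup_tauSet_of_categoryI hSpd hP hS hmax1 hmax2 h0.le h1.le
  · rw [hτ i]
    exact sSup_tauSet_of_categoryII hSpd hP hS hmax1 hmax2 (htθ2r.imp_right fun h => h.2) hII i
  · rw [hτ i]
    exact sSup_tauSet_of_categoryIII hSpd hP hS hmax1 hmax2 (htθ1r.imp_right fun h => h.2) hIII i

/-- identification of `τ = (τ₁, τ₂)` in the three categories (eq. (3.20)). -/
theorem stmt_3
    (S R : Matrix (Fin 2) (Fin 2) ℝ) (μ : V)
    (hSpd : S.PosDef) (hSsym : S.IsSymm) (hμ : μ ≠ 0)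
    (hP : condP R) (hS : condS μ R)
    (θmax1 θmax2 tθ1r tθ2r : V)
    (hmax1 : gam S μ θmax1 = 0 ∧ ∀ θ, gam S μ θ = 0 → θ 0 ≤ θmax1 0)
    (hmax2 : gam S μ θmax2 = 0 ∧ ∀ θ, gam S μ θ = 0 → θ 1 ≤ θmax2 1)
    (htθ1r : (θray1 S μ R = θmax1 ∧ tθ1r = θmax1) ∨
      (θray1 S μ R ≠ θmax1 ∧ gam S μ tθ1r = 0 ∧
        tθ1r 0 = θray1 S μ R 0 ∧ tθ1r 1 ≠ θray1 S μ R 1))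
    (htθ2r : (θray2 S μ R = θmax2 ∧ tθ2r = θmax2) ∨
      (θray2 S μ R ≠ θmax2 ∧ gam S μ tθ2r = 0 ∧
        tθ2r 1 = θray2 S μ R 1 ∧ tθ2r 0 ≠ θray2 S μ R 0))
    (θΓ1 θΓ2 : V)
    (hθΓ1 : θΓ1 = if gam2 R θmax1 ≤ 0 then θmax1 else θray1 S μ R)
    (hθΓ2 : θΓ2 = if gam1 R θmax2 ≤ 0 then θmax2 else θray2 S μ R)
    (τ : V)
    (hτ : ∀ i, τ i = sSup ((fun θ => θ i) ''
      (Dset S μ 0 (θΓ1 0) ∩ Dset S μ 1 (θΓ2 1)))) :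
    -- Category I
    (θΓ2 0 < θΓ1 0 → θΓ1 1 < θΓ2 1 → τ 0 = θΓ1 0 ∧ τ 1 = θΓ2 1) ∧
    -- Category II
    ((∀ i, θΓ2 i ≤ θΓ1 i) → τ = tθ2r) ∧
    -- Category III
    ((∀ i, θΓ1 i ≤ θΓ2 i) → τ = tθ1r) :=
  stmt_3_general S R μ hSpd hP hS θmax1 θmax2 tθ1r tθ2r hmax1 hmax2 htθ1r htθ2r θΓ1 θΓ2 hθΓ1 hθΓ2 τ
    hτ
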